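/- (BEC-bound for H_α^H.) Fix α > 0, α ≠ 1, and suppose that for every fixed y ∈ I_α^H the map x ↦ κ_α^H(x,y) is convex on I_α^H, and likewise in the second argument for every fixed first argument. Write K_i = K_α^H(X_i|Y_i) and δ = δ_α^H = 2^{1-α}. Then: if α > 1, H_α^H(X_1+X_2|Y_1Y_2) ≥ (1/(1-α))·log( (δ − K_1)(δ − K_2)/(1 − δ) + δ ); and if α < 1, H_α^H(X_1+X_2|Y_1Y_2) ≤ (1/(1-α))·log( (δ − K_1)(δ − K_2)/(1 − δ) + δ ). If instead κ_α^H is concave in each argument, the two inequalities hold with ≤ and ≥ exchanged. -/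

import Mathlib

open Real

noncomputable section

/-- Binary convolution `a∗b = a(1-b) + (1-a)b`. -/
def bconv (a b : ℝ) : ℝ := a * (1 - b) + (1 - a) * b

/-- Binary Rényi entropy `h_α(p) = (1/(1-α))·log(p^α + (1-p)^α)`. -/
def binH (α p : ℝ) : ℝ := (1 / (1 - α)) * Real.log (p ^ α + (1 - p) ^ α)

/-- Inverse of `h_α` as a map `[0, log 2] → [0, 1/2]`. -/
def binHInv (α : ℝ) : ℝ → ℝ := Function.invFunOn (binH α) (Set.Icc 0 (1/2))

/-- `k_α^A(p) = (p^α + (1-p)^α)^{1/α}`. -/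
def kA (α p : ℝ) : ℝ := (p ^ α + (1 - p) ^ α) ^ (1/α)

/-- Inverse of `k_α^A`, mapping `I_α^A` back to `[0,1/2]`. -/
def kAInv (α : ℝ) : ℝ → ℝ := Function.invFunOn (kA α) (Set.Icc 0 (1/2))

/-- `δ_α^A = 2^{(1-α)/α}`. -/
def deltaA (α : ℝ) : ℝ := (2 : ℝ) ^ ((1 - α)/α)

/-- The closed interval `I_α^A` with endpoints `1` and `δ_α^A`. -/
def IA (α : ℝ) : Set ℝ := Set.uIcc 1 (deltaA α)

/-- `κ_α^A(x,y) = k_α^A((k_α^A)⁻¹(x) ∗ (k_α^A)⁻¹(y))`. -/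
def kkA (α x y : ℝ) : ℝ := kA α (bconv (kAInv α x) (kAInv α y))

/-- `k_α^H(p) = p^α + (1-p)^α`. -/
def kH (α p : ℝ) : ℝ := p ^ α + (1 - p) ^ α

/-- Inverse of `k_α^H`, mapping `I_α^H` back to `[0,1/2]`. -/
def kHInv (α : ℝ) : ℝ → ℝ := Function.invFunOn (kH α) (Set.Icc 0 (1/2))

/-- `δ_α^H = 2^{1-α}`. -/
def deltaH (α : ℝ) : ℝ := (2 : ℝ) ^ (1 - α)

/-- The closed interval `I_α^H` with endpoints `1` and `δ_α^H`. -/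
def IH (α : ℝ) : Set ℝ := Set.uIcc 1 (deltaH α)

/-- `κ_α^H(x,y) = k_α^H((k_α^H)⁻¹(x) ∗ (k_α^H)⁻¹(y))`. -/
def kkH (α x y : ℝ) : ℝ := kH α (bconv (kHInv α x) (kHInv α y))

/-- `ĥ_α(x,y) = h_α(h_α⁻¹(x) ∗ h_α⁻¹(y))`. -/
def hhat (α x y : ℝ) : ℝ := binH α (bconv (binHInv α x) (binHInv α y))

/-- Marginal on `Y` of a joint pmf. -/
def margY {X Y : Type*} [Fintype X] (p : X → Y → ℝ) (y : Y) : ℝ := ∑ x, p x y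

/-- A joint pmf: nonnegative entries summing to one. -/
def IsPmf {X Y : Type*} [Fintype X] [Fintype Y] (p : X → Y → ℝ) : Prop :=
  (∀ x y, 0 ≤ p x y) ∧ ∑ x, ∑ y, p x y = 1

/-- Arimoto conditional Rényi entropy `H_α^A(X|Y)`. -/
def condA (α : ℝ) {X Y : Type*} [Fintype X] [Fintype Y] (p : X → Y → ℝ) : ℝ :=
  (α / (1 - α)) * Real.log (∑ y, margY p y * (∑ x, (p x y / margY p y) ^ α) ^ (1/α))

/-- Hayashi conditional Rényi entropy `H_α^H(X|Y)`. -/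
def condH (α : ℝ) {X Y : Type*} [Fintype X] [Fintype Y] (p : X → Y → ℝ) : ℝ :=
  (1 / (1 - α)) * Real.log (∑ y, ∑ x, margY p y * (p x y / margY p y) ^ α)

/-- Jizba–Arimitsu conditional Rényi entropy `H_α^J(X|Y)`. -/
def condJ (α : ℝ) {X Y : Type*} [Fintype X] [Fintype Y] (p : X → Y → ℝ) : ℝ :=
  (1 / (1 - α)) * (Real.log (∑ x, ∑ y, p x y ^ α) - Real.log (∑ y, margY p y ^ α))

/-- Cachin conditional Rényi entropy `H_α^C(X|Y)`. -/
def condC (α : ℝ) {X Y : Type*} [Fintype X] [Fintype Y] (p : X → Y → ℝ) : ℝ :=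
  (1 / (1 - α)) * ∑ y, margY p y * Real.log (∑ x, (p x y / margY p y) ^ α)

/-- `K_α^A(X|Y) = exp(((1-α)/α)·H_α^A(X|Y))`. -/
def KA (α : ℝ) {X Y : Type*} [Fintype X] [Fintype Y] (p : X → Y → ℝ) : ℝ :=
  Real.exp (((1 - α)/α) * condA α p)

/-- `K_α^H(X|Y) = exp((1-α)·H_α^H(X|Y))`. -/
def KH (α : ℝ) {X Y : Type*} [Fintype X] [Fintype Y] (p : X → Y → ℝ) : ℝ :=
  Real.exp ((1 - α) * condH α p)

/-- `K_α^J(X|Y) = exp((1-α)·H_α^J(X|Y))`. -/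
def KJ (α : ℝ) {X Y : Type*} [Fintype X] [Fintype Y] (p : X → Y → ℝ) : ℝ :=
  Real.exp ((1 - α) * condJ α p)

/-- Joint pmf of `(X₁+X₂, (Y₁,Y₂))` for independent pairs `(X₁,Y₁)`, `(X₂,Y₂)`. -/
def combine {Y1 Y2 : Type*} (p1 : Bool → Y1 → ℝ) (p2 : Bool → Y2 → ℝ) :
    Bool → Y1 × Y2 → ℝ :=
  fun z y => ∑ x : Bool, p1 x y.1 * p2 (Bool.xor x z) y.2

/-- `k_∞^A(p) = max{p, 1-p}`. -/
def kInf (p : ℝ) : ℝ := max p (1 - p)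

/-- Binary min-entropy `h_∞(p) = -log max{p, 1-p}`. -/
def binHInf (p : ℝ) : ℝ := - Real.log (max p (1 - p))

/-- Inverse of the restriction of `h_∞` to `[0,1/2]`. -/
def binHInfInv : ℝ → ℝ := Function.invFunOn binHInf (Set.Icc 0 (1/2))

/-- Conditional min-entropy `H_∞(X|Y)` for binary `X`. -/
def condInf {Y : Type*} [Fintype Y] (p : Bool → Y → ℝ) : ℝ :=
  - Real.log (∑ y, margY p y * max (p false y / margY p y) (p true y / margY p y))

/-- Unconditional Rényi entropy of a finitely supported distribution. -/
def renyiEnt (α : ℝ) {X : Type*} [Fintype X] (p : X → ℝ) : ℝ :=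
  (1 / (1 - α)) * Real.log (∑ x, p x ^ α)

/-- Distribution of the mod-2 sum of two independent binary random variables. -/
def sumDist (p1 p2 : Bool → ℝ) : Bool → ℝ := fun z => ∑ x : Bool, p1 x * p2 (Bool.xor x z)

/-! Conditioning on `Y = y` writes `K_α^H(X|Y)` as the average over `y` of `k_α^H(p_y)`, where
`p_y = P(X = 1 | Y = y)`, and `K_α^H(X₁+X₂|Y₁Y₂)` as the average over `(y₁, y₂)` of
`k_α^H(p_{y₁} ∗ p_{y₂}) = κ(k_α^H(p_{y₁}), k_α^H(p_{y₂}))`. Since `κ(1, y) = y` and `κ(δ, y) = δ`,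
convexity (concavity) of `κ(·, y)` puts it below (above) its chord through these two points. The
chord is bilinear in `(x, y)`, so it commutes with the product average, which gives
`K_α^H(X₁+X₂|Y₁Y₂) ≤ (δ - K₁)(δ - K₂)/(1 - δ) + δ` (resp. `≥`); applying `log(·)/(1-α)`,
decreasing for `α > 1` and increasing for `α < 1`, gives the four bounds. -/

section kH

variable {α : ℝ}

lemma kH_zero (hα : 0 < α) : kH α 0 = 1 := by
  simp [kH, Real.zero_rpow hα.ne']

lemma kH_half : kH α (1/2) = deltaH α := by
  rw [kH, deltaH, show (1:ℝ) - 1/2 = 1/2 by norm_num, one_div, Real.inv_rpow zero_le_two,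
    Real.rpow_sub two_pos, Real.rpow_one, ← two_mul, div_eq_mul_inv]

lemma kH_one_sub (p : ℝ) : kH α (1 - p) = kH α p := by
  rw [kH, kH, sub_sub_cancel, add_comm]

lemma kH_pos {p : ℝ} (hp : p ∈ Set.Icc (0:ℝ) 1) : 0 < kH α p := by
  rcases le_total p (1/2) with h | h
  · exact add_pos_of_nonneg_of_pos (Real.rpow_nonneg hp.1 _) (Real.rpow_pos_of_pos (by linarith) _)
  · exact add_pos_of_pos_of_nonneg (Real.rpow_pos_of_pos (by linarith) _)
      (Real.rpow_nonneg (by linarith [hp.2]) _)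

lemma continuous_kH (hα : 0 < α) : Continuous (kH α) :=
  (Real.continuous_rpow_const hα.le).add
    ((Real.continuous_rpow_const hα.le).comp (continuous_const.sub continuous_id))

lemma hasDerivAt_kH {x : ℝ} (hx : x ∈ Set.Ioo (0:ℝ) (1/2)) :
    HasDerivAt (kH α) (α * x ^ (α - 1) - α * (1 - x) ^ (α - 1)) x := by
  have h1 := Real.hasDerivAt_rpow_const (p := α) (Or.inl hx.1.ne')
  have h2 := (Real.hasDerivAt_rpow_const (x := 1 - x) (p := α)
    (Or.inl (by linarith [hx.2]))).comp x ((hasDerivAt_id x).const_sub 1)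
  rw [sub_eq_add_neg, ← mul_neg_one (α * _)]
  exact h1.add h2

lemma kH_strictAntiOn (hα1 : 1 < α) : StrictAntiOn (kH α) (Set.Icc 0 (1/2)) := by
  refine strictAntiOn_of_deriv_neg (convex_Icc _ _) (continuous_kH (by linarith)).continuousOn
    fun x hx => ?_
  rw [interior_Icc] at hx
  have : x ^ (α - 1) < (1 - x) ^ (α - 1) :=
    Real.rpow_lt_rpow hx.1.le (by linarith [hx.2]) (by linarith)
  rw [(hasDerivAt_kH hx).deriv]
  nlinarith

lemma kH_strictMonoOn (hα : 0 < α) (hα1 : α < 1) : StrictMonoOn (kH α) (Set.Icc 0 (1/2)) := by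
  refine strictMonoOn_of_deriv_pos (convex_Icc _ _) (continuous_kH hα).continuousOn fun x hx => ?_
  rw [interior_Icc] at hx
  have : (1 - x) ^ (α - 1) < x ^ (α - 1) :=
    Real.rpow_lt_rpow_of_neg hx.1 (by linarith [hx.2]) (by linarith)
  rw [(hasDerivAt_kH hx).deriv]
  nlinarith

lemma kH_surjOn (hα : 0 < α) : Set.SurjOn (kH α) (Set.Icc 0 (1/2)) (IH α) := by
  have := intermediate_value_uIcc (a := 0) (b := 1/2) (continuous_kH hα).continuousOn
  rwa [kH_zero hα, kH_half, Set.uIcc_of_le (show (0:ℝ) ≤ 1/2 by norm_num)] at this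

lemma kH_bijOn (hα : 0 < α) (hα1 : α ≠ 1) : Set.BijOn (kH α) (Set.Icc 0 (1/2)) (IH α) := by
  rcases hα1.lt_or_gt with h | h
  · have hmono := kH_strictMonoOn hα h
    have hmaps := hmono.monotoneOn.mapsTo_Icc
    rw [kH_zero hα, kH_half] at hmaps
    exact ⟨hmaps.mono_right Set.Icc_subset_uIcc, hmono.injOn, kH_surjOn hα⟩
  · have hanti := kH_strictAntiOn h
    have hmaps := hanti.antitoneOn.mapsTo_Icc
    rw [kH_zero hα, kH_half] at hmaps
    exact ⟨hmaps.mono_right Set.Icc_subset_uIcc', hanti.injOn, kH_surjOn hα⟩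

lemma kHInv_kH (hα : 0 < α) (hα1 : α ≠ 1) {p : ℝ} (hp : p ∈ Set.Icc (0:ℝ) (1/2)) :
    kHInv α (kH α p) = p :=
  (kH_bijOn hα hα1).invOn_invFunOn.1 hp

lemma kH_kHInv (hα : 0 < α) (hα1 : α ≠ 1) {x : ℝ} (hx : x ∈ IH α) : kH α (kHInv α x) = x :=
  (kH_bijOn hα hα1).invOn_invFunOn.2 hx

lemma kH_min_one_sub (p : ℝ) : kH α (min p (1 - p)) = kH α p := by
  rcases le_total p (1 - p) with h | h
  · rw [min_eq_left h]
  · rw [min_eq_right h, kH_one_sub]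

lemma min_one_sub_mem_Icc {p : ℝ} (hp : p ∈ Set.Icc (0:ℝ) 1) :
    min p (1 - p) ∈ Set.Icc (0:ℝ) (1/2) :=
  ⟨le_min hp.1 (by linarith [hp.2]),
    by rcases le_total p (1 - p) with h | h <;> simp [h] <;> linarith⟩

lemma kH_mem_IH (hα : 0 < α) (hα1 : α ≠ 1) {p : ℝ} (hp : p ∈ Set.Icc (0:ℝ) 1) : kH α p ∈ IH α := by
  rw [← kH_min_one_sub]
  exact (kH_bijOn hα hα1).mapsTo (min_one_sub_mem_Icc hp)

lemma bconv_one_sub_left (a b : ℝ) : bconv (1 - a) b = 1 - bconv a b := by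
  unfold bconv; ring

lemma bconv_one_sub_right (a b : ℝ) : bconv a (1 - b) = 1 - bconv a b := by
  unfold bconv; ring

lemma bconv_mem_Icc {a b : ℝ} (ha : a ∈ Set.Icc (0:ℝ) 1) (hb : b ∈ Set.Icc (0:ℝ) 1) :
    bconv a b ∈ Set.Icc (0:ℝ) 1 := by
  obtain ⟨ha0, ha1⟩ := ha
  obtain ⟨hb0, hb1⟩ := hb
  constructor <;> unfold bconv <;> nlinarith

lemma kH_bconv_min_one_sub (a b : ℝ) :
    kH α (bconv (min a (1 - a)) (min b (1 - b))) = kH α (bconv a b) := by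
  rcases le_total a (1 - a) with ha | ha <;> rcases le_total b (1 - b) with hb | hb <;>
    simp only [min_eq_left, min_eq_right, ha, hb, bconv_one_sub_left, bconv_one_sub_right,
      kH_one_sub, sub_sub_cancel]

lemma kkH_kH_kH (hα : 0 < α) (hα1 : α ≠ 1) {a b : ℝ} (ha : a ∈ Set.Icc (0:ℝ) 1)
    (hb : b ∈ Set.Icc (0:ℝ) 1) : kkH α (kH α a) (kH α b) = kH α (bconv a b) := by
  rw [← kH_min_one_sub a, ← kH_min_one_sub b, kkH, kHInv_kH hα hα1 (min_one_sub_mem_Icc ha),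
    kHInv_kH hα hα1 (min_one_sub_mem_Icc hb), kH_bconv_min_one_sub]

end kH

section Chord

variable {α : ℝ}

lemma deltaH_ne_one (hα1 : α ≠ 1) : deltaH α ≠ 1 := by
  intro h
  have := (Real.rpow_right_inj two_pos (by norm_num : (2:ℝ) ≠ 1)).1
    (h.trans (Real.rpow_zero 2).symm)
  exact hα1 (by linarith)

lemma pos_of_mem_IH {x : ℝ} (hx : x ∈ IH α) : 0 < x :=
  lt_of_lt_of_le (lt_min one_pos (Real.rpow_pos_of_pos two_pos _)) hx.1

lemma kkH_one_left (hα : 0 < α) (hα1 : α ≠ 1) {y : ℝ} (hy : y ∈ IH α) : kkH α 1 y = y := by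
  have h0 : kHInv α 1 = 0 := by
    rw [← kH_zero hα]
    exact kHInv_kH hα hα1 (by norm_num)
  rw [kkH, h0, show bconv 0 (kHInv α y) = kHInv α y by simp [bconv], kH_kHInv hα hα1 hy]

lemma kkH_deltaH_left (hα : 0 < α) (hα1 : α ≠ 1) (y : ℝ) : kkH α (deltaH α) y = deltaH α := by
  have h0 : kHInv α (deltaH α) = 1/2 := by
    rw [← kH_half]
    exact kHInv_kH hα hα1 (by norm_num)
  rw [kkH, h0, show bconv (1/2) (kHInv α y) = 1/2 by unfold bconv; ring, kH_half]

-- The chord of `x ↦ κ(x, y)` through `(1, y)` and `(δ, δ)`.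
def becBound (α x y : ℝ) : ℝ := (deltaH α - x) * (deltaH α - y) / (1 - deltaH α) + deltaH α

lemma becBound_add_smul (hα1 : α ≠ 1) {a b : ℝ} (hab : a + b = 1) (y : ℝ) :
    becBound α (a • 1 + b • deltaH α) y = a • y + b • deltaH α := by
  have : 1 - deltaH α ≠ 0 := sub_ne_zero.2 (deltaH_ne_one hα1).symm
  obtain rfl : b = 1 - a := by linarith
  simp only [becBound, smul_eq_mul]
  field_simp
  ring

lemma kkH_le_becBound (hα : 0 < α) (hα1 : α ≠ 1) {x y : ℝ} (hy : y ∈ IH α)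
    (hconv : ConvexOn ℝ (IH α) (fun x => kkH α x y)) (hx : x ∈ IH α) :
    kkH α x y ≤ becBound α x y := by
  rw [IH, ← segment_eq_uIcc] at hx
  obtain ⟨a, b, ha, hb, hab, rfl⟩ := hx
  have := hconv.2 Set.left_mem_uIcc Set.right_mem_uIcc ha hb hab
  beta_reduce at this
  rw [becBound_add_smul hα1 hab]
  rwa [kkH_one_left hα hα1 hy, kkH_deltaH_left hα hα1] at this

lemma becBound_le_kkH (hα : 0 < α) (hα1 : α ≠ 1) {x y : ℝ} (hy : y ∈ IH α)
    (hconc : ConcaveOn ℝ (IH α) (fun x => kkH α x y)) (hx : x ∈ IH α) :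
    becBound α x y ≤ kkH α x y := by
  rw [IH, ← segment_eq_uIcc] at hx
  obtain ⟨a, b, ha, hb, hab, rfl⟩ := hx
  have := hconc.2 Set.left_mem_uIcc Set.right_mem_uIcc ha hb hab
  beta_reduce at this
  rw [becBound_add_smul hα1 hab]
  rwa [kkH_one_left hα hα1 hy, kkH_deltaH_left hα hα1] at this

lemma becBound_mem_IH (hα1 : α ≠ 1) {x y : ℝ} (hx : x ∈ IH α) (hy : y ∈ IH α) :
    becBound α x y ∈ IH α := by
  rw [IH, ← segment_eq_uIcc] at hx
  obtain ⟨a, b, ha, hb, hab, rfl⟩ := hx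
  rw [becBound_add_smul hα1 hab]
  exact convex_uIcc _ _ hy Set.right_mem_uIcc ha hb hab

lemma sum_sum_mul_becBound {ι κ : Type*} [Fintype ι] [Fintype κ] {w : ι → ℝ} {v : κ → ℝ}
    (hw : ∑ i, w i = 1) (hv : ∑ j, v j = 1) (f : ι → ℝ) (g : κ → ℝ) :
    ∑ i, ∑ j, w i * v j * becBound α (f i) (g j) =
      becBound α (∑ i, w i * f i) (∑ j, v j * g j) := by
  have hw' : ∑ i, w i * (deltaH α - f i) = deltaH α - ∑ i, w i * f i := by
    simp only [mul_sub, Finset.sum_sub_distrib, ← Finset.sum_mul, hw, one_mul]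
  have hv' : ∑ j, v j * (deltaH α - g j) = deltaH α - ∑ j, v j * g j := by
    simp only [mul_sub, Finset.sum_sub_distrib, ← Finset.sum_mul, hv, one_mul]
  calc ∑ i, ∑ j, w i * v j * becBound α (f i) (g j)
      = ∑ i, ∑ j, (w i * (deltaH α - f i) * (v j * (deltaH α - g j)) / (1 - deltaH α)
          + deltaH α * (w i * v j)) := by
        refine Finset.sum_congr rfl fun i _ => Finset.sum_congr rfl fun j _ => ?_
        rw [becBound]
        ring
    _ = (∑ i, w i * (deltaH α - f i)) * (∑ j, v j * (deltaH α - g j)) / (1 - deltaH α)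
          + deltaH α * ((∑ i, w i) * (∑ j, v j)) := by
        rw [Finset.sum_mul_sum, Finset.sum_mul_sum]
        simp only [Finset.sum_add_distrib, Finset.sum_div, Finset.mul_sum]
    _ = becBound α (∑ i, w i * f i) (∑ j, v j * g j) := by
        rw [hw', hv', hw, hv, mul_one, mul_one, becBound]

end Chord

lemma Finset.sum_mul_pos_of_sum_eq_one {ι : Type*} [Fintype ι] {w f : ι → ℝ} (hw : ∀ i, 0 ≤ w i)
    (h1 : ∑ i, w i = 1) (hf : ∀ i, 0 < f i) : 0 < ∑ i, w i * f i := by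
  obtain ⟨i, hi⟩ : ∃ i, w i ≠ 0 := by
    by_contra! h
    simp [h] at h1
  exact Finset.sum_pos' (fun j _ => mul_nonneg (hw j) (hf j).le)
    ⟨i, Finset.mem_univ _, mul_pos ((hw i).lt_of_ne' hi) (hf i)⟩

section Pmf

variable {α : ℝ} {Y : Type*}

-- `P(X = true | Y = y)`, with the junk value `0` when `P(Y = y) = 0`.
def condProb (p : Bool → Y → ℝ) (y : Y) : ℝ := p true y / margY p y

lemma margY_eq_add (p : Bool → Y → ℝ) (y : Y) : margY p y = p true y + p false y :=
  Fintype.sum_bool _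

lemma sum_bool_margY_mul_rpow (p : Bool → Y → ℝ) (y : Y) :
    ∑ x : Bool, margY p y * (p x y / margY p y) ^ α = margY p y * kH α (condProb p y) := by
  rcases eq_or_ne (margY p y) 0 with h | h
  · simp [h]
  · have : p false y / margY p y = 1 - condProb p y := by
      rw [condProb, eq_sub_iff_add_eq, ← add_div, add_comm, ← margY_eq_add, div_self h]
    rw [Fintype.sum_bool, this, kH, condProb]
    ring

variable [Fintype Y]

lemma margY_nonneg {X : Type*} [Fintype X] {p : X → Y → ℝ} (hp : IsPmf p) (y : Y) :
    0 ≤ margY p y :=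
  Finset.sum_nonneg fun x _ => hp.1 x y

lemma sum_margY {X : Type*} [Fintype X] {p : X → Y → ℝ} (hp : IsPmf p) : ∑ y, margY p y = 1 := by
  rw [← hp.2, Finset.sum_comm]
  rfl

lemma condProb_mem_Icc {p : Bool → Y → ℝ} (hp : IsPmf p) (y : Y) :
    condProb p y ∈ Set.Icc (0:ℝ) 1 :=
  ⟨div_nonneg (hp.1 _ _) (margY_nonneg hp y),
    div_le_one_of_le₀ (by linarith [margY_eq_add p y, hp.1 false y]) (margY_nonneg hp y)⟩

lemma KH_eq_of_pos (hα1 : α ≠ 1) {X : Type*} [Fintype X] (p : X → Y → ℝ)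
    (hpos : 0 < ∑ y, ∑ x, margY p y * (p x y / margY p y) ^ α) :
    KH α p = ∑ y, ∑ x, margY p y * (p x y / margY p y) ^ α := by
  rw [KH, condH, ← mul_assoc, mul_one_div_cancel (sub_ne_zero.2 hα1.symm), one_mul,
    Real.exp_log hpos]

lemma KH_eq_sum (hα1 : α ≠ 1) {p : Bool → Y → ℝ} (hp : IsPmf p) :
    KH α p = ∑ y, margY p y * kH α (condProb p y) := by
  have hsum : ∑ y, ∑ x, margY p y * (p x y / margY p y) ^ α =
      ∑ y, margY p y * kH α (condProb p y) :=
    Finset.sum_congr rfl fun y _ => sum_bool_margY_mul_rpow p y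
  have hpos := Finset.sum_mul_pos_of_sum_eq_one (margY_nonneg hp) (sum_margY hp)
    fun y => kH_pos (α := α) (condProb_mem_Icc hp y)
  rw [KH_eq_of_pos hα1 p (hsum ▸ hpos), hsum]

lemma KH_mem_IH (hα : 0 < α) (hα1 : α ≠ 1) {p : Bool → Y → ℝ} (hp : IsPmf p) :
    KH α p ∈ IH α := by
  rw [KH_eq_sum hα1 hp]
  exact (convex_uIcc _ _).sum_mem (fun y _ => margY_nonneg hp y) (sum_margY hp)
    fun y _ => kH_mem_IH hα hα1 (condProb_mem_Icc hp y)

lemma condH_eq_log_KH (hα1 : α ≠ 1) {X : Type*} [Fintype X] (p : X → Y → ℝ) :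
    condH α p = 1 / (1 - α) * Real.log (KH α p) := by
  rw [KH, Real.log_exp, ← mul_assoc, one_div_mul_cancel (sub_ne_zero.2 hα1.symm), one_mul]

end Pmf

section Combine

variable {α : ℝ} {Y1 Y2 : Type*} {p1 : Bool → Y1 → ℝ} {p2 : Bool → Y2 → ℝ}

lemma margY_combine (p1 : Bool → Y1 → ℝ) (p2 : Bool → Y2 → ℝ) (y1 : Y1) (y2 : Y2) :
    margY (combine p1 p2) (y1, y2) = margY p1 y1 * margY p2 y2 := by
  simp only [margY, combine, Fintype.sum_bool, Bool.xor_true, Bool.xor_false, Bool.not_true,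
    Bool.not_false]
  ring

lemma condProb_combine {y1 : Y1} {y2 : Y2} (h1 : margY p1 y1 ≠ 0) (h2 : margY p2 y2 ≠ 0) :
    condProb (combine p1 p2) (y1, y2) = bconv (condProb p1 y1) (condProb p2 y2) := by
  rw [condProb, margY_combine]
  simp only [condProb, bconv, combine, Fintype.sum_bool, Bool.xor_true, Bool.not_true,
    Bool.not_false]
  rw [margY_eq_add] at h1 h2 ⊢
  rw [margY_eq_add]
  field_simp
  ring

lemma sum_bool_combine_mul_rpow (p1 : Bool → Y1 → ℝ) (p2 : Bool → Y2 → ℝ) (y1 : Y1) (y2 : Y2) :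
    ∑ x : Bool, margY (combine p1 p2) (y1, y2) *
        (combine p1 p2 x (y1, y2) / margY (combine p1 p2) (y1, y2)) ^ α =
      margY p1 y1 * margY p2 y2 * kH α (bconv (condProb p1 y1) (condProb p2 y2)) := by
  rw [sum_bool_margY_mul_rpow, margY_combine]
  rcases eq_or_ne (margY p1 y1) 0 with h1 | h1
  · simp [h1]
  rcases eq_or_ne (margY p2 y2) 0 with h2 | h2
  · simp [h2]
  rw [condProb_combine h1 h2]

variable [Fintype Y1] [Fintype Y2]

lemma KH_combine_eq (hα1 : α ≠ 1) (hp1 : IsPmf p1) (hp2 : IsPmf p2) :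
    KH α (combine p1 p2) = ∑ y1, ∑ y2,
      margY p1 y1 * margY p2 y2 * kH α (bconv (condProb p1 y1) (condProb p2 y2)) := by
  have hsum : ∑ y, ∑ x, margY (combine p1 p2) y * (combine p1 p2 x y / margY (combine p1 p2) y) ^ α
      = ∑ y1, ∑ y2, margY p1 y1 * margY p2 y2 *
          kH α (bconv (condProb p1 y1) (condProb p2 y2)) := by
    rw [Fintype.sum_prod_type]
    exact Finset.sum_congr rfl fun y1 _ => Finset.sum_congr rfl fun y2 _ =>
      sum_bool_combine_mul_rpow p1 p2 y1 y2
  have hpos : 0 < ∑ y1, ∑ y2, margY p1 y1 * margY p2 y2 *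
      kH α (bconv (condProb p1 y1) (condProb p2 y2)) := by
    simp only [mul_assoc, ← Finset.mul_sum]
    refine Finset.sum_mul_pos_of_sum_eq_one (margY_nonneg hp1) (sum_margY hp1) fun y1 => ?_
    refine Finset.sum_mul_pos_of_sum_eq_one (margY_nonneg hp2) (sum_margY hp2) fun y2 => ?_
    exact kH_pos (bconv_mem_Icc (condProb_mem_Icc hp1 y1) (condProb_mem_Icc hp2 y2))
  rw [KH_eq_of_pos hα1 _ (hsum ▸ hpos), hsum]

lemma KH_combine_le_becBound (hα : 0 < α) (hα1 : α ≠ 1) (hp1 : IsPmf p1) (hp2 : IsPmf p2)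
    (hconv : ∀ y ∈ IH α, ConvexOn ℝ (IH α) (fun x => kkH α x y)) :
    KH α (combine p1 p2) ≤ becBound α (KH α p1) (KH α p2) := by
  rw [KH_combine_eq hα1 hp1 hp2, KH_eq_sum hα1 hp1, KH_eq_sum hα1 hp2,
    ← sum_sum_mul_becBound (sum_margY hp1) (sum_margY hp2)]
  refine Finset.sum_le_sum fun y1 _ => Finset.sum_le_sum fun y2 _ =>
    mul_le_mul_of_nonneg_left ?_ (mul_nonneg (margY_nonneg hp1 y1) (margY_nonneg hp2 y2))
  have hk1 := kH_mem_IH hα hα1 (condProb_mem_Icc hp1 y1)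
  have hk2 := kH_mem_IH hα hα1 (condProb_mem_Icc hp2 y2)
  rw [← kkH_kH_kH hα hα1 (condProb_mem_Icc hp1 y1) (condProb_mem_Icc hp2 y2)]
  exact kkH_le_becBound hα hα1 hk2 (hconv _ hk2) hk1

lemma becBound_le_KH_combine (hα : 0 < α) (hα1 : α ≠ 1) (hp1 : IsPmf p1) (hp2 : IsPmf p2)
    (hconc : ∀ y ∈ IH α, ConcaveOn ℝ (IH α) (fun x => kkH α x y)) :
    becBound α (KH α p1) (KH α p2) ≤ KH α (combine p1 p2) := by
  rw [KH_combine_eq hα1 hp1 hp2, KH_eq_sum hα1 hp1, KH_eq_sum hα1 hp2,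
    ← sum_sum_mul_becBound (sum_margY hp1) (sum_margY hp2)]
  refine Finset.sum_le_sum fun y1 _ => Finset.sum_le_sum fun y2 _ =>
    mul_le_mul_of_nonneg_left ?_ (mul_nonneg (margY_nonneg hp1 y1) (margY_nonneg hp2 y2))
  have hk1 := kH_mem_IH hα hα1 (condProb_mem_Icc hp1 y1)
  have hk2 := kH_mem_IH hα hα1 (condProb_mem_Icc hp2 y2)
  rw [← kkH_kH_kH hα hα1 (condProb_mem_Icc hp1 y1) (condProb_mem_Icc hp2 y2)]
  exact becBound_le_kkH hα hα1 hk2 (hconc _ hk2) hk1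

end Combine

lemma one_div_one_sub_mul_log_le_of_le {α A B : ℝ} (hA : 0 < A) (hAB : A ≤ B) :
    (1 < α → 1 / (1 - α) * Real.log B ≤ 1 / (1 - α) * Real.log A) ∧
      (α < 1 → 1 / (1 - α) * Real.log A ≤ 1 / (1 - α) * Real.log B) := by
  have hlog := Real.log_le_log hA hAB
  exact ⟨fun h => mul_le_mul_of_nonpos_left hlog (one_div_nonpos.2 (by linarith)),
    fun h => mul_le_mul_of_nonneg_left hlog (one_div_nonneg.2 (by linarith))⟩

/-- BEC-bound for the Hayashi conditional Rényi entropy. -/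
theorem stmt_7 (α : ℝ) (hα : 0 < α) (hα1 : α ≠ 1)
    {Y1 Y2 : Type*} [Fintype Y1] [Fintype Y2]
    (p1 : Bool → Y1 → ℝ) (p2 : Bool → Y2 → ℝ)
    (hp1 : IsPmf p1) (hp2 : IsPmf p2) :
    (((∀ y ∈ IH α, ConvexOn ℝ (IH α) (fun x => kkH α x y)) ∧
      (∀ x ∈ IH α, ConvexOn ℝ (IH α) (fun y => kkH α x y))) →
      (1 < α → (1 / (1 - α)) * Real.log
          ((deltaH α - KH α p1) * (deltaH α - KH α p2) / (1 - deltaH α) + deltaH α) ≤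
          condH α (combine p1 p2)) ∧
      (α < 1 → condH α (combine p1 p2) ≤ (1 / (1 - α)) * Real.log
          ((deltaH α - KH α p1) * (deltaH α - KH α p2) / (1 - deltaH α) + deltaH α))) ∧
    (((∀ y ∈ IH α, ConcaveOn ℝ (IH α) (fun x => kkH α x y)) ∧
      (∀ x ∈ IH α, ConcaveOn ℝ (IH α) (fun y => kkH α x y))) →
      (1 < α → condH α (combine p1 p2) ≤ (1 / (1 - α)) * Real.log
          ((deltaH α - KH α p1) * (deltaH α - KH α p2) / (1 - deltaH α) + deltaH α)) ∧
      (α < 1 → (1 / (1 - α)) * Real.log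
          ((deltaH α - KH α p1) * (deltaH α - KH α p2) / (1 - deltaH α) + deltaH α) ≤
          condH α (combine p1 p2))) := by
  rw [condH_eq_log_KH hα1]
  refine ⟨fun ⟨hconv, _⟩ => ?_, fun ⟨hconc, _⟩ => ?_⟩
  · exact one_div_one_sub_mul_log_le_of_le (Real.exp_pos _)
      (KH_combine_le_becBound hα hα1 hp1 hp2 hconv)
  · have hbound := becBound_mem_IH hα1 (KH_mem_IH hα hα1 hp1) (KH_mem_IH hα hα1 hp2)
    exact one_div_one_sub_mul_log_le_of_le (pos_of_mem_IH hbound)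
      (becBound_le_KH_combine hα hα1 hp1 hp2 hconc)
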